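/- arXiv:1302.7015 — 2 statements merged into one kernel-verified Lean document; each statement's English description precedes it below -/
import Mathlib

section
/- For the explicit parametrization x(u,v) with f = 0, the partial derivative x_u(u,v) is a nonzero null vector for all (u,v), i.e., ⟨x_u, x_u⟩ = 0. -/
def mink (v w : Fin 3 → ℝ) : ℝ := -(v 0 * w 0) + v 1 * w 1 + v 2 * w 2

noncomputable def xparam (u v : ℝ) : Fin 3 → ℝ :=
  ![(1/(4*Real.sqrt 2)) * (Real.exp u * (3*v^2 + 4*v + 4) - (v^3 + 2*v^2 + 4*v + 4)),
    (1/(12*Real.sqrt 2)) * (Real.exp u * (-3*v^2 + 12*v + 12) + (v^3 - 6*v^2 - 12*v - 12)),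
    (1/6) * (Real.exp u * (3*v^2 + 6*v) - (v^3 + 3*v^2))]

/-!
The `u`-dependence of `x` is affine in `e^u`: `x(u,v) = (e^u - 1) • n(v) + x(0,v)`, so
`x_u = e^u • n(v)`. The vector `n(v)` is null by a polynomial identity in `v`, and it is nonzero
because its time component is a positive multiple of `3v² + 4v + 4 > 0`.
-/

lemma mink_smul_left (c : ℝ) (v w : Fin 3 → ℝ) : mink (c • v) w = c * mink v w := by
  simp only [mink, Pi.smul_apply, smul_eq_mul]
  ring

lemma mink_smul_right (c : ℝ) (v w : Fin 3 → ℝ) : mink v (c • w) = c * mink v w := by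
  simp only [mink, Pi.smul_apply, smul_eq_mul]
  ring

noncomputable def nullDir (v : ℝ) : Fin 3 → ℝ :=
  ![(1/(4*Real.sqrt 2)) * (3*v^2 + 4*v + 4),
    (1/(12*Real.sqrt 2)) * (-3*v^2 + 12*v + 12),
    (1/6) * (3*v^2 + 6*v)]

lemma xparam_eq_smul_nullDir_add (u v : ℝ) :
    xparam u v = (Real.exp u - 1) • nullDir v + xparam 0 v := by
  ext i
  fin_cases i <;> simp [xparam, nullDir] <;> ring

lemma hasDerivAt_xparam (u v : ℝ) :
    HasDerivAt (fun u' => xparam u' v) (Real.exp u • nullDir v) u := by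
  rw [funext fun u' => xparam_eq_smul_nullDir_add u' v]
  exact (((Real.hasDerivAt_exp u).sub_const 1).smul_const (nullDir v)).add_const _

lemma mink_nullDir_self (v : ℝ) : mink (nullDir v) (nullDir v) = 0 := by
  simp only [mink, nullDir, Matrix.cons_val_zero, Matrix.cons_val_one, Matrix.cons_val_two,
    Matrix.head_cons, Matrix.tail_cons]
  field_simp
  rw [Real.sq_sqrt zero_le_two]
  ring

lemma nullDir_zero_pos (v : ℝ) : 0 < nullDir v 0 := by
  have : 0 < 3*v^2 + 4*v + 4 := by nlinarith [sq_nonneg (3*v + 2)]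
  simp only [nullDir, Matrix.cons_val_zero]
  positivity

lemma nullDir_ne_zero (v : ℝ) : nullDir v ≠ 0 :=
  fun h => (nullDir_zero_pos v).ne' (congrFun h 0)

theorem xu_nonzero_null :
    ∀ u v : ℝ,
      deriv (fun u' => xparam u' v) u ≠ 0 ∧
      mink (deriv (fun u' => xparam u' v) u) (deriv (fun u' => xparam u' v) u) = 0 := by
  intro u v
  rw [(hasDerivAt_xparam u v).deriv]
  refine ⟨smul_ne_zero (Real.exp_ne_zero u) (nullDir_ne_zero v), ?_⟩
  rw [mink_smul_left, mink_smul_right, mink_nullDir_self, mul_zero, mul_zero]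
end

section
/- For the explicit parametrization x(u,v) with f = 0, the Minkowski inner product ⟨x_u, x_v⟩ vanishes identically, so every tangent plane of the surface is degenerate (lightlike). -/
open Real

theorem hasDerivAt_cubic {E : Type*} [NormedAddCommGroup E] [NormedSpace ℝ E]
    (b₀ b₁ b₂ b₃ : E) (t : ℝ) :
    HasDerivAt (fun s : ℝ => s ^ 3 • b₃ + s ^ 2 • b₂ + s • b₁ + b₀)
      ((3 * t ^ 2) • b₃ + (2 * t) • b₂ + b₁) t := by
  have h₃ : HasDerivAt (fun s : ℝ => s ^ 3) (3 * t ^ 2) t := by simpa using hasDerivAt_pow 3 t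
  have h₂ : HasDerivAt (fun s : ℝ => s ^ 2) (2 * t) t := by simpa using hasDerivAt_pow 2 t
  simpa using (((h₃.smul_const b₃).add (h₂.smul_const b₂)).add
    ((hasDerivAt_id t).smul_const b₁)).add_const b₀

theorem HasDerivAt.mink_self {a : ℝ → Fin 3 → ℝ} {a' : Fin 3 → ℝ} {t : ℝ}
    (h : HasDerivAt a a' t) :
    HasDerivAt (fun s => mink (a s) (a s)) (2 * mink (a t) a') t := by
  have hc (i : Fin 3) := hasDerivAt_pi.1 h i
  refine ((((hc 0).mul (hc 0)).neg.add ((hc 1).mul (hc 1))).add ((hc 2).mul (hc 2))).congr_deriv ?_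
  simp only [mink]
  ring

theorem mink_deriv_eq_zero_of_null {a : ℝ → Fin 3 → ℝ} {t : ℝ} (ha : DifferentiableAt ℝ a t)
    (hnull : ∀ s, mink (a s) (a s) = 0) : mink (a t) (deriv a t) = 0 := by
  have h := ha.hasDerivAt.mink_self
  simp only [hnull] at h
  linarith [h.unique (hasDerivAt_const t (0 : ℝ))]

theorem mink_smul_smul_sub (c : ℝ) (x y : Fin 3 → ℝ) :
    mink (c • x) (c • y - x) = c ^ 2 * mink x y - c * mink x x := by
  simp only [mink, Pi.sub_apply, Pi.smul_apply, smul_eq_mul]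
  ring

theorem mink_partials_exp_smul_sub_eq_zero {a b : ℝ → Fin 3 → ℝ} {v : ℝ}
    (ha : DifferentiableAt ℝ a v) (hb : HasDerivAt b (a v) v)
    (hnull : ∀ s, mink (a s) (a s) = 0) (u : ℝ) :
    mink (deriv (fun u' => exp u' • a v - b v) u) (deriv (fun v' => exp u • a v' - b v') v)
      = 0 := by
  have hu : HasDerivAt (fun u' => exp u' • a v - b v) (exp u • a v) u :=
    ((hasDerivAt_exp u).smul_const (a v)).sub_const (b v)
  have hv : HasDerivAt (fun v' => exp u • a v' - b v') (exp u • deriv a v - a v) v :=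
    (ha.hasDerivAt.const_smul (exp u)).sub hb
  rw [hu.deriv, hv.deriv, mink_smul_smul_sub, mink_deriv_eq_zero_of_null ha hnull, hnull]
  ring

noncomputable def xparamBase (v : ℝ) : Fin 3 → ℝ :=
  v ^ 3 • ![1 / (4 * √2), -(1 / (12 * √2)), 1 / 6] + v ^ 2 • ![2 / (4 * √2), 6 / (12 * √2), 1 / 2]
    + v • ![4 / (4 * √2), 12 / (12 * √2), 0] + ![4 / (4 * √2), 12 / (12 * √2), 0]

noncomputable def xparamRuling (v : ℝ) : Fin 3 → ℝ :=
  (3 * v ^ 2) • ![1 / (4 * √2), -(1 / (12 * √2)), 1 / 6]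
    + (2 * v) • ![2 / (4 * √2), 6 / (12 * √2), 1 / 2] + ![4 / (4 * √2), 12 / (12 * √2), 0]

theorem hasDerivAt_xparamBase (v : ℝ) : HasDerivAt xparamBase (xparamRuling v) v :=
  hasDerivAt_cubic _ _ _ _ v

theorem differentiable_xparamRuling : Differentiable ℝ xparamRuling := by
  unfold xparamRuling
  fun_prop

theorem mink_xparamRuling_self (v : ℝ) : mink (xparamRuling v) (xparamRuling v) = 0 := by
  have h2 : √2 ^ 2 = 2 := sq_sqrt (by norm_num)
  simp only [mink, xparamRuling, Pi.add_apply, Pi.smul_apply, smul_eq_mul, Matrix.cons_val_zero,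
    Matrix.cons_val_one, Matrix.cons_val_two, Matrix.tail_cons, Matrix.head_cons]
  field_simp
  ring_nf
  simp only [h2]
  ring

theorem xparam_eq (u v : ℝ) : xparam u v = exp u • xparamRuling v - xparamBase v := by
  ext i
  fin_cases i <;>
    simp only [xparam, xparamRuling, xparamBase, Fin.zero_eta, Fin.mk_one, Fin.reduceFinMk,
      Pi.sub_apply, Pi.add_apply, Pi.smul_apply, smul_eq_mul, Matrix.cons_val_zero,
      Matrix.cons_val_one, Matrix.cons_val_two, Matrix.tail_cons, Matrix.head_cons] <;> ring

theorem xu_xv_orthogonal :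
    ∀ u v : ℝ,
      mink (deriv (fun u' => xparam u' v) u) (deriv (fun v' => xparam u v') v) = 0 := by
  intro u v
  simp only [xparam_eq]
  exact mink_partials_exp_smul_sub_eq_zero (differentiable_xparamRuling v)
    (hasDerivAt_xparamBase v) mink_xparamRuling_self u
end
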